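/- Genus 2 commutation relation: for the derivations L_0, L_2, L_4, L_6 of ℚ[λ₄,λ₆,λ₈,λ_{10}] defined by L_{2k}(λ_{2s}) = T_{2k+2,2s−2} with T the explicit genus-2 matrix, one has [L_2, L_4] = (2/5)(4λ₆ L_0 − 4λ₄ L_2 + 5 L_6). -/

import Mathlib

open MvPolynomial

/-- Variables: `X 0 = λ₄`, `X 1 = λ₆`, `X 2 = λ₈`, `X 3 = λ₁₀`. -/
noncomputable abbrev l4 : MvPolynomial (Fin 4) ℚ := X 0
noncomputable abbrev l6 : MvPolynomial (Fin 4) ℚ := X 1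
noncomputable abbrev l8 : MvPolynomial (Fin 4) ℚ := X 2
noncomputable abbrev l10 : MvPolynomial (Fin 4) ℚ := X 3

/-- The genus-2 matrix `T = (T_{2k+2,2s−2})`, rows and columns indexed by
`0,1,2,3 ↔ λ₄,λ₆,λ₈,λ₁₀`. -/
noncomputable def T2 : Matrix (Fin 4) (Fin 4) (MvPolynomial (Fin 4) ℚ) :=
  ![![4 * l4, 6 * l6, 8 * l8, 10 * l10],
    ![6 * l6, 8 * l8 - C (12/5 : ℚ) * l4 ^ 2, 10 * l10 - C (8/5 : ℚ) * l4 * l6,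
      - (C (4/5 : ℚ) * l4 * l8)],
    ![8 * l8, 10 * l10 - C (8/5 : ℚ) * l4 * l6, 4 * l4 * l8 - C (12/5 : ℚ) * l6 ^ 2,
      6 * l4 * l10 - C (6/5 : ℚ) * l6 * l8],
    ![10 * l10, - (C (4/5 : ℚ) * l4 * l8), 6 * l4 * l10 - C (6/5 : ℚ) * l6 * l8,
      4 * l6 * l10 - C (8/5 : ℚ) * l8 ^ 2]]

/-- The derivation `L_{2k} = Σ_s T_{2k+2,2s−2} ∂/∂λ_{2s}` of `ℚ[λ₄,λ₆,λ₈,λ₁₀]`;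
`Lg2 k` is `L_{2k}`. -/
noncomputable def Lg2 (k : Fin 4) (p : MvPolynomial (Fin 4) ℚ) : MvPolynomial (Fin 4) ℚ :=
  ∑ j : Fin 4, T2 k j * pderiv j p

/-!
A derivation of `ℚ[λ₄, λ₆, λ₈, λ₁₀]` is determined by its values on the generators, and `L_{2k}`
is the derivation sending `λ_{2s}` to the entry `T_{2k+2,2s−2}`. The bracket of the derivations
with generator values `a` and `b` sends `X i` to `D_a (b i) - D_b (a i)`, so the theorem amounts to
four polynomial identities among the entries of `T`, one for each generator.
-/

namespace Derivation
variable {R A M : Type*} [CommSemiring R] [CommSemiring A] [AddCommMonoid M] [Algebra R A]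
  [Module A M] [Module R M]

theorem finset_sum_apply {ι : Type*} (s : Finset ι) (D : ι → Derivation R A M) (a : A) :
    (∑ i ∈ s, D i) a = ∑ i ∈ s, D i a := by
  rw [← coeFnAddMonoidHom_apply, map_sum, Finset.sum_apply]
  rfl

@[simp]
theorem map_ofNat (D : Derivation R A M) (n : ℕ) [n.AtLeastTwo] :
    D (no_index (OfNat.ofNat n)) = 0 :=
  D.map_natCast n

end Derivation

namespace MvPolynomial

variable {R σ : Type*} [CommRing R]

theorem mkDerivation_bracket (a b : σ → MvPolynomial σ R) :
    ⁅mkDerivation R a, mkDerivation R b⁆ =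
      mkDerivation R fun i => mkDerivation R a (b i) - mkDerivation R b (a i) :=
  derivation_ext fun i => by simp [Derivation.commutator_apply, mkDerivation_X]

theorem mkDerivation_apply_eq_sum_pderiv [Fintype σ] [DecidableEq σ]
    (a : σ → MvPolynomial σ R) (p : MvPolynomial σ R) :
    mkDerivation R a p = ∑ j, a j * pderiv j p := by
  have : mkDerivation R a = ∑ j, a j • pderiv j :=
    derivation_ext fun i => by
      simp [Derivation.finset_sum_apply, mkDerivation_X, pderiv_X, Pi.single_apply]
  simp [this, Derivation.finset_sum_apply]

end MvPolynomial

theorem Lg2_eq_mkDerivation (k : Fin 4) : Lg2 k = mkDerivation ℚ (T2 k) := by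
  funext p
  rw [mkDerivation_apply_eq_sum_pderiv, Lg2]

theorem genus2_bracket_L2_L4_coeff (i : Fin 4) :
    mkDerivation ℚ (T2 1) (T2 2 i) - mkDerivation ℚ (T2 2) (T2 1 i) =
      C (2/5 : ℚ) * (4 * l6 * T2 0 i - 4 * l4 * T2 1 i + 5 * T2 3 i) := by
  fin_cases i <;>
  · simp only [T2, Matrix.cons_val', Matrix.cons_val, Matrix.cons_val_fin_one, Matrix.cons_val_zero,
      Matrix.cons_val_one, Fin.isValue, Fin.reduceFinMk, Fin.zero_eta, Fin.mk_one, map_sub,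
      map_neg, Derivation.leibniz, Derivation.leibniz_pow, Derivation.map_ofNat, derivation_C,
      mkDerivation_X, smul_eq_mul, nsmul_eq_mul]
    -- `ring` treats `C (12/5)` etc. as atoms, so compare the polynomial functions on `ℚ⁴` instead.
    refine MvPolynomial.funext fun x => ?_
    simp only [map_zero, map_add, map_sub, map_neg, map_mul, map_pow, map_natCast, eval_ofNat,
      eval_C, eval_X]
    ring

/-- `[L₂, L₄] = (2/5)(4λ₆ L₀ − 4λ₄ L₂ + 5 L₆)`. -/
theorem genus2_bracket_L2_L4 (p : MvPolynomial (Fin 4) ℚ) :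
    Lg2 1 (Lg2 2 p) - Lg2 2 (Lg2 1 p)
      = C (2/5 : ℚ) * (4 * l6 * Lg2 0 p - 4 * l4 * Lg2 1 p + 5 * Lg2 3 p) := by
  simp only [Lg2_eq_mkDerivation]
  rw [← Derivation.commutator_apply, mkDerivation_bracket, funext genus2_bracket_L2_L4_coeff]
  simp only [mkDerivation_apply_eq_sum_pderiv, Fin.sum_univ_four]
  ring
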